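/- arXiv:1912.12913 — 3 statements merged into one kernel-verified Lean document; each statement's English description precedes it below -/
import Mathlib

section
/- Let u be a global finite-energy solution of the defocusing equation ∂_t²u - Δu = -|u|^{p-1}u on ℝ^d, d ≥ 3, satisfying the Morawetz bound ∫_ℝ ∫_{ℝ^d} |u(x,t)|^{p+1}/|x| dx dt ≤ C E, and suppose sup_{t≥0} ∫_{|x|>t+R} |u(x,t)|^{p+1} dx → 0 as R → ∞. Then liminf_{t→+∞} ∫_{ℝ^d} |u(x,t)|^{p+1} dx = 0. -/
/-!
Split the potential energy at time `t ≥ 0` at the radius `t + R`. The exterior part is bounded by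
the uniform exterior energy `ext R`, and since `|x| ≤ t + R` on the interior, that part is at most
`(t + R) g(t)` with `g(t) = ∫ |u|^{p+1}/|x| dx`. The Morawetz bound makes `g` integrable in time,
while `1/(t + R)` is not, so `(t + R) g(t)` has lower limit `0`. Hence the lower limit of the
potential energy is at most `ext R` for every `R`, and `ext R → 0`.
-/

open MeasureTheory Real Filter Set ENNReal

theorem lintegral_Ioi_inv_ofReal_eq_top (a : ℝ) : ∫⁻ t in Ioi a, (ENNReal.ofReal t)⁻¹ = ∞ := by
  have h_not_finite : ¬ HasFiniteIntegral (·⁻¹ : ℝ → ℝ) (volume.restrict (Ioi a)) :=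
    fun h ↦ not_integrableOn_Ioi_inv ⟨measurable_inv.aestronglyMeasurable, h⟩
  rw [hasFiniteIntegral_iff_enorm, not_lt, top_le_iff] at h_not_finite
  refine eq_top_mono (lintegral_mono fun t ↦ ?_) h_not_finite
  rcases le_or_gt t 0 with ht | ht
  · simp [ENNReal.ofReal_of_nonpos ht]
  · rw [enorm_inv ht.ne', Real.enorm_of_nonneg ht.le]

theorem lintegral_Ioi_inv_ofReal_add_eq_top (a R : ℝ) :
    ∫⁻ t in Ioi a, (ENNReal.ofReal (t + R))⁻¹ = ∞ := by
  have h := (measurePreserving_add_right volume R).setLIntegral_comp_preimage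
    (measurableSet_Ioi (a := a + R)) (f := fun s ↦ (ENNReal.ofReal s)⁻¹)
    ENNReal.measurable_ofReal.inv
  rwa [preimage_add_const_Ioi, add_sub_cancel_right, lintegral_Ioi_inv_ofReal_eq_top] at h

theorem liminf_ofReal_add_mul_eq_zero {g : ℝ → ℝ≥0∞} {a : ℝ} (hg : ∫⁻ t in Ioi a, g t ≠ ∞)
    (R : ℝ) : liminf (fun t ↦ ENNReal.ofReal (t + R) * g t) atTop = 0 := by
  by_contra hne
  obtain ⟨c, hc_pos, hc_lt⟩ := exists_between (pos_iff_ne_zero.mpr hne)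
  obtain ⟨T, hT⟩ := eventually_atTop.mp (eventually_lt_of_lt_liminf hc_lt)
  set b := max a T
  have h_lower : ∀ t ∈ Ioi b, c * (ENNReal.ofReal (t + R))⁻¹ ≤ g t := fun t ht ↦ by
    rw [← div_eq_mul_inv]
    exact ENNReal.div_le_of_le_mul' (hT t ((le_max_right a T).trans ht.le)).le
  have h_top : ∫⁻ t in Ioi b, c * (ENNReal.ofReal (t + R))⁻¹ = ∞ := by
    rw [lintegral_const_mul' _ _ hc_lt.ne_top, lintegral_Ioi_inv_ofReal_add_eq_top,
      ENNReal.mul_top hc_pos.ne']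
  refine hg (eq_top_mono ?_ h_top)
  calc ∫⁻ t in Ioi b, c * (ENNReal.ofReal (t + R))⁻¹
      ≤ ∫⁻ t in Ioi b, g t := setLIntegral_mono' measurableSet_Ioi h_lower
    _ ≤ ∫⁻ t in Ioi a, g t := lintegral_mono_set (Ioi_subset_Ioi (le_max_left a T))

section

variable {E : Type*} [NormedAddCommGroup E] [MeasurableSpace E] [OpensMeasurableSpace E]
  (μ : Measure E) [NullSingletonClass μ] (f : E → ℝ) (r : ℝ)

-- `f x / ‖x‖` is `0` at the origin, so the origin has to be `μ`-null.
theorem setLIntegral_norm_le_le_mul_lintegral_div_norm :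
    ∫⁻ x in {x | ‖x‖ ≤ r}, ENNReal.ofReal (f x) ∂μ
      ≤ ENNReal.ofReal r * ∫⁻ x, ENNReal.ofReal (f x / ‖x‖) ∂μ := by
  rw [← lintegral_const_mul' _ _ ofReal_ne_top]
  refine (lintegral_mono_ae ?_).trans (setLIntegral_le_lintegral {x | ‖x‖ ≤ r} _)
  have h_ne_zero : ∀ᵐ x ∂μ.restrict {x | ‖x‖ ≤ r}, x ≠ 0 :=
    ae_restrict_of_ae (compl_mem_ae_iff.mpr (measure_singleton 0))
  filter_upwards [h_ne_zero, ae_restrict_mem (measurableSet_le measurable_norm measurable_const)]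
    with x hx hxr
  have hx : 0 < ‖x‖ := norm_pos_iff.mpr hx
  calc ENNReal.ofReal (f x) = ENNReal.ofReal ‖x‖ * ENNReal.ofReal (f x / ‖x‖) := by
        rw [← ENNReal.ofReal_mul hx.le, mul_div_cancel₀ _ hx.ne']
    _ ≤ ENNReal.ofReal r * ENNReal.ofReal (f x / ‖x‖) := by gcongr

theorem lintegral_le_exterior_add_mul_lintegral_div_norm :
    ∫⁻ x, ENNReal.ofReal (f x) ∂μ
      ≤ ∫⁻ x in {x | r < ‖x‖}, ENNReal.ofReal (f x) ∂μ
        + ENNReal.ofReal r * ∫⁻ x, ENNReal.ofReal (f x / ‖x‖) ∂μ := by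
  rw [← lintegral_add_compl _ (measurableSet_lt measurable_const continuous_norm.measurable)]
  gcongr
  simpa only [compl_ofPred, not_lt] using setLIntegral_norm_le_le_mul_lintegral_div_norm μ f r

end

theorem liminf_potential_energy_zero_general (d : ℕ) (hd : 3 ≤ d) (p C E : ℝ)
    (u : EuclideanSpace ℝ (Fin d) → ℝ → ℝ)
    (hmorawetz : (∫⁻ t : ℝ, ∫⁻ x : EuclideanSpace ℝ (Fin d),
        ENNReal.ofReal (|u x t| ^ (p + 1) / ‖x‖)) ≤ ENNReal.ofReal (C * E))
    (hexterior : Tendsto (fun R : ℝ =>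
        ⨆ (t : ℝ) (_ : 0 ≤ t),
          ∫⁻ x in {x : EuclideanSpace ℝ (Fin d) | t + R < ‖x‖},
            ENNReal.ofReal (|u x t| ^ (p + 1)))
      atTop (nhds 0)) :
    liminf (fun t : ℝ =>
        ∫⁻ x : EuclideanSpace ℝ (Fin d), ENNReal.ofReal (|u x t| ^ (p + 1)))
      atTop = 0 := by
  have : Nonempty (Fin d) := ⟨⟨0, by omega⟩⟩
  set g : ℝ → ℝ≥0∞ := fun t ↦ ∫⁻ x, ENNReal.ofReal (|u x t| ^ (p + 1) / ‖x‖)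
  have hg : ∫⁻ t in Ioi 0, g t ≠ ∞ :=
    ne_top_of_le_ne_top ofReal_ne_top ((setLIntegral_le_lintegral _ _).trans hmorawetz)
  refine le_antisymm (ge_of_tendsto hexterior (Eventually.of_forall fun R ↦ ?_)) bot_le
  set exterior := ⨆ (t : ℝ) (_ : 0 ≤ t),
    ∫⁻ x in {x : EuclideanSpace ℝ (Fin d) | t + R < ‖x‖}, ENNReal.ofReal (|u x t| ^ (p + 1))
  calc liminf (fun t ↦ ∫⁻ x, ENNReal.ofReal (|u x t| ^ (p + 1))) atTop
      ≤ liminf (fun t ↦ exterior + ENNReal.ofReal (t + R) * g t) atTop := by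
        refine liminf_le_liminf ?_
        filter_upwards [eventually_ge_atTop 0] with t ht
        refine (lintegral_le_exterior_add_mul_lintegral_div_norm volume _ (t + R)).trans ?_
        gcongr
        exact le_iSup₂_of_le t ht le_rfl
    _ = exterior := by
        rw [liminf_const_add _ _ _ (by isBoundedDefault) (by isBoundedDefault),
          liminf_ofReal_add_mul_eq_zero hg, add_zero]

/-- If a global finite-energy defocusing solution satisfies the Morawetz bound and its
potential energy exterior to shifted light cones is uniformly small, then the potential
energy has vanishing lower limit as `t → +∞`. -/
theorem liminf_potential_energy_zero (d : ℕ) (hd : 3 ≤ d) (p C E : ℝ)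
    (hp : 1 < p) (hC : 0 < C) (hE : 0 ≤ E)
    (u : EuclideanSpace ℝ (Fin d) → ℝ → ℝ)
    (hu : ContDiff ℝ ⊤ (Function.uncurry u))
    (hwave : ∀ (x : EuclideanSpace ℝ (Fin d)) (t : ℝ),
      deriv (fun s => deriv (fun s' => u x s') s) t
        - ∑ i : Fin d, fderiv ℝ (fun y => fderiv ℝ (fun z => u z t) y
            (EuclideanSpace.single i 1)) x (EuclideanSpace.single i 1)
      = -(|u x t| ^ (p - 1) * u x t))
    (hmorawetz : (∫⁻ t : ℝ, ∫⁻ x : EuclideanSpace ℝ (Fin d),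
        ENNReal.ofReal (|u x t| ^ (p + 1) / ‖x‖)) ≤ ENNReal.ofReal (C * E))
    (hexterior : Tendsto (fun R : ℝ =>
        ⨆ (t : ℝ) (_ : 0 ≤ t),
          ∫⁻ x in {x : EuclideanSpace ℝ (Fin d) | t + R < ‖x‖},
            ENNReal.ofReal (|u x t| ^ (p + 1)))
      atTop (nhds 0)) :
    liminf (fun t : ℝ =>
        ∫⁻ x : EuclideanSpace ℝ (Fin d), ENNReal.ofReal (|u x t| ^ (p + 1)))
      atTop = 0 :=
  liminf_potential_energy_zero_general d hd p C E u hmorawetz hexterior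
end

section
/- Let d ≥ 3 and let g ∈ C₀^∞(ℝ) be supported in [-R,R]. Define ũ(x,t) = -|x|^{-(d-1)/2} ∫_{t-|x|}^{t+|x|} g(η) dη. Then for t > R, the error F̃ = (∂_t² - Δ)ũ satisfies F̃(x,t) = 0 for |x| < t - R and |F̃(x,t)| ≤ λ_d |x|^{-(d+3)/2} ‖g‖_{L¹} for |x| ≥ t - R, where λ_d = (d-1)(d-3)/4; consequently ‖F̃‖_{L¹_t L²_x([2R,∞)×ℝ^d)} ≤ C(d) ‖g‖_{L¹} R^{-1/2}. -/
open MeasureTheory Real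

noncomputable def gradCLM {d : ℕ} (y : EuclideanSpace ℝ (Fin d)) :
    EuclideanSpace ℝ (Fin d) →L[ℝ] ℝ :=
  ∑ i, y i • (EuclideanSpace.proj i : EuclideanSpace ℝ (Fin d) →L[ℝ] ℝ)

lemma gradCLM_apply {d : ℕ} (y v : EuclideanSpace ℝ (Fin d)) :
    gradCLM y v = ∑ i, y i * v i := by
  simp [gradCLM]

lemma gradCLM_single {d : ℕ} (y : EuclideanSpace ℝ (Fin d)) (i : Fin d) :
    gradCLM y (EuclideanSpace.single i (1:ℝ)) = y i := by
  rw [gradCLM_apply]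
  rw [Finset.sum_eq_single i]
  · simp [EuclideanSpace.single_apply]
  · intro j _ hj; simp [EuclideanSpace.single_apply, hj]
  · simp

lemma sum_sq_eq_norm_sq {d : ℕ} (y : EuclideanSpace ℝ (Fin d)) :
    ∑ i, y i ^ 2 = ‖y‖ ^ 2 := by
  rw [EuclideanSpace.norm_eq]
  rw [Real.sq_sqrt (by positivity)]
  simp [sq_abs]

lemma hasFDerivAt_norm_eu {d : ℕ} {y : EuclideanSpace ℝ (Fin d)} (hy : y ≠ 0) :
    HasFDerivAt (fun z : EuclideanSpace ℝ (Fin d) => ‖z‖) (‖y‖⁻¹ • gradCLM y) y := by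
  have hny : 0 < ‖y‖ := norm_pos_iff.2 hy
  have hQ : HasFDerivAt (fun z : EuclideanSpace ℝ (Fin d) => ∑ i, z i ^ 2)
      (∑ i, (2 * y i) • (EuclideanSpace.proj i : EuclideanSpace ℝ (Fin d) →L[ℝ] ℝ)) y := by
    apply HasFDerivAt.fun_sum
    intro i _
    have h := ((EuclideanSpace.proj i : EuclideanSpace ℝ (Fin d) →L[ℝ] ℝ).hasFDerivAt (x := y)).fun_mul
      ((EuclideanSpace.proj i : EuclideanSpace ℝ (Fin d) →L[ℝ] ℝ).hasFDerivAt (x := y))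
    have h2 : (fun z : EuclideanSpace ℝ (Fin d) =>
        (EuclideanSpace.proj i) z * (EuclideanSpace.proj i) z) = fun z => z i ^ 2 := by
      funext z; simp [sq]
    rw [h2] at h
    refine h.congr_fderiv ?_
    symm
    simp only [PiLp.proj_apply]
    module
  have hQy : (∑ i, y i ^ 2) = ‖y‖ ^ 2 := sum_sq_eq_norm_sq y
  have hs : HasDerivAt Real.sqrt (1 / (2 * Real.sqrt (∑ i, y i ^ 2))) (∑ i, y i ^ 2) :=
    Real.hasDerivAt_sqrt (by rw [hQy]; positivity)
  have hcomp := hs.comp_hasFDerivAt y hQ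
  have hfun : (Real.sqrt ∘ fun z : EuclideanSpace ℝ (Fin d) => ∑ i, z i ^ 2)
      = fun z : EuclideanSpace ℝ (Fin d) => ‖z‖ := by
    funext z
    simp only [Function.comp_apply, sum_sq_eq_norm_sq]
    exact Real.sqrt_sq (norm_nonneg z)
  rw [hfun] at hcomp
  refine hcomp.congr_fderiv ?_
  symm
  rw [hQy, Real.sqrt_sq (norm_nonneg y)]
  rw [gradCLM, Finset.smul_sum, Finset.smul_sum]
  refine Finset.sum_congr rfl fun i _ => ?_
  rw [smul_smul, smul_smul]
  congr 1
  field_simp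

lemma hasFDerivAt_radial {d : ℕ} {φ : ℝ → ℝ} {φ' : ℝ} {y : EuclideanSpace ℝ (Fin d)}
    (hy : y ≠ 0) (hφ : HasDerivAt φ φ' ‖y‖) :
    HasFDerivAt (fun z : EuclideanSpace ℝ (Fin d) => φ ‖z‖) ((φ' * ‖y‖⁻¹) • gradCLM y) y := by
  have := hφ.comp_hasFDerivAt y (hasFDerivAt_norm_eu hy)
  refine this.congr_fderiv ?_
  rw [smul_smul]


section
variable {d : ℕ}

lemma sum_fderiv_eq {V : EuclideanSpace ℝ (Fin d) → ℝ} {φ φ₁ φ₂ : ℝ → ℝ}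
    (hV : ∀ z, V z = φ ‖z‖)
    (hφ : ∀ r : ℝ, 0 < r → HasDerivAt φ (φ₁ r) r)
    (hφ₁ : ∀ r : ℝ, 0 < r → HasDerivAt φ₁ (φ₂ r) r)
    {x : EuclideanSpace ℝ (Fin d)} (hx : x ≠ 0) :
    ∑ i : Fin d, fderiv ℝ (fun y => fderiv ℝ V y (EuclideanSpace.single i 1)) x
        (EuclideanSpace.single i 1)
      = φ₂ ‖x‖ + ((d:ℝ) - 1) * ‖x‖⁻¹ * φ₁ ‖x‖ := by
  have hr : 0 < ‖x‖ := norm_pos_iff.2 hx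
  have hVeq : V = fun z => φ ‖z‖ := funext hV
  have hVd : ∀ {y : EuclideanSpace ℝ (Fin d)}, y ≠ 0 →
      HasFDerivAt V ((φ₁ ‖y‖ * ‖y‖⁻¹) • gradCLM y) y := by
    intro y hy
    rw [hVeq]
    exact hasFDerivAt_radial hy (hφ _ (norm_pos_iff.2 hy))
  have hfd1 : ∀ {y : EuclideanSpace ℝ (Fin d)}, y ≠ 0 → ∀ i : Fin d,
      fderiv ℝ V y (EuclideanSpace.single i 1) = φ₁ ‖y‖ * ‖y‖⁻¹ * y i := by
    intro y hy i
    rw [(hVd hy).fderiv]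
    simp [gradCLM_single]
  have hψ : HasDerivAt (fun ρ => φ₁ ρ * ρ⁻¹) (φ₂ ‖x‖ * ‖x‖⁻¹ + φ₁ ‖x‖ * (-(‖x‖^2)⁻¹)) ‖x‖ :=
    (hφ₁ _ hr).mul (hasDerivAt_inv hr.ne')
  have hNi : ∀ i : Fin d, HasFDerivAt (fun y : EuclideanSpace ℝ (Fin d) => (φ₁ ‖y‖ * ‖y‖⁻¹) * y i)
      ((φ₁ ‖x‖ * ‖x‖⁻¹) • (EuclideanSpace.proj i : EuclideanSpace ℝ (Fin d) →L[ℝ] ℝ)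
        + (x i) • (((φ₂ ‖x‖ * ‖x‖⁻¹ + φ₁ ‖x‖ * (-(‖x‖^2)⁻¹)) * ‖x‖⁻¹) • gradCLM x)) x := by
    intro i
    have hA := hasFDerivAt_radial hx hψ
    have hB : HasFDerivAt (fun y : EuclideanSpace ℝ (Fin d) => y i)
        (EuclideanSpace.proj i : EuclideanSpace ℝ (Fin d) →L[ℝ] ℝ) x :=
      (EuclideanSpace.proj i : EuclideanSpace ℝ (Fin d) →L[ℝ] ℝ).hasFDerivAt
    exact hA.mul hB
  have hout : ∀ i : Fin d, fderiv ℝ (fun y => fderiv ℝ V y (EuclideanSpace.single i 1)) x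
      (EuclideanSpace.single i 1)
      = (φ₁ ‖x‖ * ‖x‖⁻¹) + (φ₂ ‖x‖ * ‖x‖⁻¹ + φ₁ ‖x‖ * (-(‖x‖^2)⁻¹)) * ‖x‖⁻¹ * (x i)^2 := by
    intro i
    have heq : (fun y => fderiv ℝ V y (EuclideanSpace.single i 1))
        =ᶠ[nhds x] (fun y : EuclideanSpace ℝ (Fin d) => (φ₁ ‖y‖ * ‖y‖⁻¹) * y i) := by
      filter_upwards [IsOpen.mem_nhds isOpen_compl_singleton hx] with y hy
      exact hfd1 hy i
    rw [heq.fderiv_eq, (hNi i).fderiv]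
    simp only [ContinuousLinearMap.add_apply, ContinuousLinearMap.smul_apply, gradCLM_single,
      PiLp.proj_apply, EuclideanSpace.single_apply, if_pos rfl, smul_eq_mul]
    norm_num
    ring
  rw [Finset.sum_congr rfl (fun i _ => hout i)]
  rw [Finset.sum_add_distrib, Finset.sum_const, ← Finset.mul_sum]
  have hss : ∑ i : Fin d, (x i)^2 = ‖x‖^2 := sum_sq_eq_norm_sq x
  rw [hss]
  simp only [Finset.card_univ, Fintype.card_fin, nsmul_eq_mul]
  field_simp
  ring
end

set_option maxHeartbeats 1000000 in
/-- Estimates for the error `F̃ = (∂_t² - Δ)ũ` of the approximate radial free wave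
`ũ(x,t) = -|x|^{-(d-1)/2} ∫_{t-|x|}^{t+|x|} g(η) dη` built from a profile
`g ∈ C₀^∞` supported in `[-R,R]`: it vanishes for `|x| < t - R`, satisfies a pointwise
bound `λ_d |x|^{-(d+3)/2}‖g‖_{L¹}` elsewhere, and `‖F̃‖_{L¹L²([2R,∞)×ℝ^d)} ≤ C(d)‖g‖_{L¹}R^{-1/2}`. -/
theorem approximate_wave_error_estimates (d : ℕ) (hd : 3 ≤ d) :
    ∃ C : ℝ, 0 < C ∧
      ∀ (R : ℝ), 0 < R →
      ∀ (g : ℝ → ℝ), ContDiff ℝ (⊤ : ℕ∞) g →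
        (∀ η : ℝ, η ∉ Set.Icc (-R) R → g η = 0) →
      ∀ U : EuclideanSpace ℝ (Fin d) → ℝ → ℝ,
        (U = fun x t => -(‖x‖ ^ (-(((d : ℝ) - 1) / 2))) * ∫ η in (t - ‖x‖)..(t + ‖x‖), g η) →
      ∀ F : EuclideanSpace ℝ (Fin d) → ℝ → ℝ,
        (F = fun x t =>
          deriv (fun s => deriv (fun s' => U x s') s) t
            - ∑ i : Fin d, fderiv ℝ (fun y => fderiv ℝ (fun z => U z t) y
                (EuclideanSpace.single i 1)) x (EuclideanSpace.single i 1)) →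
        ((∀ (t : ℝ) (x : EuclideanSpace ℝ (Fin d)), R < t → ‖x‖ < t - R → F x t = 0)
        ∧ (∀ (t : ℝ) (x : EuclideanSpace ℝ (Fin d)), R < t → x ≠ 0 → t - R ≤ ‖x‖ →
            |F x t| ≤ ((d : ℝ) - 1) * ((d : ℝ) - 3) / 4 * ‖x‖ ^ (-(((d : ℝ) + 3) / 2))
              * ∫ η : ℝ, |g η|)
        ∧ (∫ t in Set.Ioi (2 * R),
            (∫ x : EuclideanSpace ℝ (Fin d), (F x t) ^ 2) ^ ((1 : ℝ) / 2))
            ≤ C * (∫ η : ℝ, |g η|) * R ^ (-(1 : ℝ) / 2)) := by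
  classical
  have hd3 : (3:ℝ) ≤ (d:ℝ) := by exact_mod_cast hd
  set lam : ℝ := ((d : ℝ) - 1) * ((d : ℝ) - 3) / 4 with hlam
  have hlam0 : 0 ≤ lam := by
    apply div_nonneg _ (by norm_num)
    nlinarith
  set rho1 : EuclideanSpace ℝ (Fin d) → ℝ :=
    fun x => if 1 ≤ ‖x‖ then ‖x‖ ^ (-((d:ℝ)+3)) else 0 with hrho1
  have hrho1_nonneg : ∀ x, 0 ≤ rho1 x := by
    intro x; rw [hrho1]
    dsimp only
    split
    · positivity
    · exact le_rfl
  have hrho1_int : Integrable rho1 := by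
    have hmeas : Measurable rho1 := by
      have : rho1 = fun x => if 1 ≤ ‖x‖ then Real.exp (Real.log ‖x‖ * (-((d:ℝ)+3))) else 0 := by
        funext x
        rw [hrho1]
        dsimp only
        split
        · rename_i h1
          rw [Real.rpow_def_of_pos (lt_of_lt_of_le one_pos h1)]
        · rfl
      rw [this]
      exact Measurable.ite (measurableSet_le measurable_const measurable_norm)
        (Real.measurable_exp.comp ((Real.measurable_log.comp measurable_norm).mul_const _))
        measurable_const
    refine Integrable.mono' ((integrable_one_add_norm (E := EuclideanSpace ℝ (Fin d))
        (r := (d:ℝ)+3) ?_).const_mul ((2:ℝ) ^ ((d:ℝ)+3))) hmeas.aestronglyMeasurable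
        (Filter.Eventually.of_forall fun x => ?_)
    · rw [finrank_euclideanSpace_fin]; linarith
    · rw [hrho1]
      dsimp only
      split
      · rename_i h1
        have hx0 : (0:ℝ) < ‖x‖ := lt_of_lt_of_le one_pos h1
        rw [Real.norm_eq_abs, abs_of_nonneg (by positivity)]
        have e1 : ‖x‖ ^ (-((d:ℝ)+3)) = (‖x‖⁻¹) ^ ((d:ℝ)+3) := by
          rw [← Real.rpow_neg_one, ← Real.rpow_mul (norm_nonneg x)]
          ring_nf
        have e2 : (2:ℝ) ^ ((d:ℝ)+3) * (1 + ‖x‖) ^ (-((d:ℝ)+3))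
            = (2 * (1+‖x‖)⁻¹) ^ ((d:ℝ)+3) := by
          rw [Real.mul_rpow (by norm_num) (by positivity), ← Real.rpow_neg_one (1+‖x‖),
            ← Real.rpow_mul (by positivity)]
          ring_nf
        rw [e1, e2]
        apply Real.rpow_le_rpow (by positivity) _ (by positivity)
        have h2 : (1 + ‖x‖) ≤ 2 * ‖x‖ := by linarith
        have h3 : (2 * ‖x‖)⁻¹ ≤ (1 + ‖x‖)⁻¹ := by
          apply inv_anti₀ (by positivity) h2
        calc ‖x‖⁻¹ = 2 * (2*‖x‖)⁻¹ := by field_simp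
        _ ≤ 2 * (1+‖x‖)⁻¹ := by linarith
      · simp; positivity
  set cd : ℝ := ∫ x, rho1 x with hcd
  have hcd0 : 0 ≤ cd := integral_nonneg hrho1_nonneg
  have hsqcd : 0 ≤ Real.sqrt cd := Real.sqrt_nonneg cd
  refine ⟨2 * lam * Real.sqrt cd + 1, by nlinarith, ?_⟩
  intro R hR g hg hsupp U hU F hF
  set p : ℝ := ((d:ℝ) - 1) / 2 with hp
  have hgc : Continuous g := hg.continuous
  have hgd : ∀ s : ℝ, HasDerivAt g (deriv g s) s := fun s =>
    ((hg.differentiable (by simp)) s).hasDerivAt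
  have hcs : HasCompactSupport g := HasCompactSupport.intro isCompact_Icc hsupp
  have hgint : Integrable g := hgc.integrable_of_hasCompactSupport hcs
  set M : ℝ := ∫ η : ℝ, |g η| with hM
  have hM0 : 0 ≤ M := integral_nonneg fun η => abs_nonneg _
  set G : ℝ → ℝ := fun s => ∫ η in (0:ℝ)..s, g η with hGdef
  have hG : ∀ s : ℝ, HasDerivAt G (g s) s := fun s =>
    intervalIntegral.integral_hasDerivAt_right (hgc.intervalIntegrable _ _)
      (hgc.stronglyMeasurableAtFilter _ _) hgc.continuousAt
  have hint : ∀ a b : ℝ, (∫ η in a..b, g η) = G b - G a := by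
    intro a b
    rw [hGdef]
    exact (intervalIntegral.integral_interval_sub_left (hgc.intervalIntegrable 0 b)
      (hgc.intervalIntegrable 0 a)).symm
  have hWle : ∀ a b : ℝ, a ≤ b → |G b - G a| ≤ M := by
    intro a b hab
    rw [← hint]
    calc |∫ η in a..b, g η| ≤ ∫ η in a..b, |g η| :=
          intervalIntegral.abs_integral_le_integral_abs hab
    _ = ∫ η in Set.Ioc a b, |g η| := by rw [intervalIntegral.integral_of_le hab]
    _ ≤ M := setIntegral_le_integral hgint.abs (Filter.Eventually.of_forall fun η => abs_nonneg _)
  have hU' : ∀ (y : EuclideanSpace ℝ (Fin d)) (s : ℝ),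
      U y s = -(‖y‖ ^ (-p)) * (G (s + ‖y‖) - G (s - ‖y‖)) := by
    intro y s
    rw [hU]
    dsimp only
    rw [hint]
  have hgz : ∀ η : ℝ, R < η → g η = 0 := by
    intro η hη
    exact hsupp η (fun h => absurd h.2 (by linarith))
  have hg'z : ∀ η : ℝ, R < η → deriv g η = 0 := by
    intro η hη
    have h : g =ᶠ[nhds η] fun _ => 0 :=
      Filter.eventually_of_mem (Ioi_mem_nhds hη) fun z hz => hgz z hz
    rw [h.deriv_eq]
    exact deriv_const η 0
  have hU0 : ∀ (y : EuclideanSpace ℝ (Fin d)) (s : ℝ), ‖y‖ < s - R → U y s = 0 := by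
    intro y s hys
    rw [hU]
    dsimp only
    have hEq : Set.EqOn g 0 (Set.uIcc (s - ‖y‖) (s + ‖y‖)) := by
      intro η hη
      rw [Set.uIcc_of_le (by linarith [norm_nonneg y])] at hη
      exact hgz η (by linarith [hη.1])
    rw [intervalIntegral.integral_congr hEq]
    simp
  have hUt : ∀ (x : EuclideanSpace ℝ (Fin d)) (s : ℝ),
      HasDerivAt (fun s' => U x s') (-(‖x‖ ^ (-p)) * (g (s + ‖x‖) - g (s - ‖x‖))) s := by
    intro x s
    have h1 : HasDerivAt (fun s' => G (s' + ‖x‖)) (g (s + ‖x‖)) s := by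
      simpa [Function.comp_def] using (hG (s + ‖x‖)).comp s ((hasDerivAt_id s).add_const ‖x‖)
    have h2 : HasDerivAt (fun s' => G (s' - ‖x‖)) (g (s - ‖x‖)) s := by
      simpa [Function.comp_def] using (hG (s - ‖x‖)).comp s ((hasDerivAt_id s).sub_const ‖x‖)
    have h3 := (h1.sub h2).const_mul (-(‖x‖ ^ (-p)))
    have hfe : (fun s' => U x s') = fun s' => -(‖x‖ ^ (-p)) * (G (s' + ‖x‖) - G (s' - ‖x‖)) :=
      funext fun s' => hU' x s'
    rw [hfe]
    exact h3
  have htime : ∀ (x : EuclideanSpace ℝ (Fin d)) (t : ℝ),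
      deriv (fun s => deriv (fun s' => U x s') s) t
        = -(‖x‖ ^ (-p)) * (deriv g (t + ‖x‖) - deriv g (t - ‖x‖)) := by
    intro x t
    have h0 : (fun s => deriv (fun s' => U x s') s)
        = fun s => -(‖x‖ ^ (-p)) * (g (s + ‖x‖) - g (s - ‖x‖)) :=
      funext fun s => (hUt x s).deriv
    rw [h0]
    have h1 : HasDerivAt (fun s => g (s + ‖x‖)) (deriv g (t + ‖x‖)) t := by
      simpa [Function.comp_def] using (hgd (t + ‖x‖)).comp t ((hasDerivAt_id t).add_const ‖x‖)
    have h2 : HasDerivAt (fun s => g (s - ‖x‖)) (deriv g (t - ‖x‖)) t := by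
      simpa [Function.comp_def] using (hgd (t - ‖x‖)).comp t ((hasDerivAt_id t).sub_const ‖x‖)
    exact ((h1.sub h2).const_mul (-(‖x‖ ^ (-p)))).deriv
  -- radial profile derivatives
  have hderW : ∀ (t r : ℝ), HasDerivAt (fun ρ => G (t + ρ) - G (t - ρ)) (g (t+r) + g (t-r)) r := by
    intro t r
    have h1 : HasDerivAt (fun ρ => G (t + ρ)) (g (t+r)) r := by
      simpa [Function.comp_def] using (hG (t + r)).comp r ((hasDerivAt_id r).const_add t)
    have h2 : HasDerivAt (fun ρ => G (t - ρ)) (-g (t-r)) r := by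
      simpa [Function.comp_def] using (hG (t - r)).comp r ((hasDerivAt_id r).const_sub t)
    simpa [sub_neg_eq_add] using h1.fun_sub h2
  have hderS : ∀ (t r : ℝ), HasDerivAt (fun ρ => g (t + ρ) + g (t - ρ))
      (deriv g (t+r) - deriv g (t-r)) r := by
    intro t r
    have h1 : HasDerivAt (fun ρ => g (t + ρ)) (deriv g (t+r)) r := by
      simpa [Function.comp_def] using (hgd (t + r)).comp r ((hasDerivAt_id r).const_add t)
    have h2 : HasDerivAt (fun ρ => g (t - ρ)) (-deriv g (t-r)) r := by
      simpa [Function.comp_def] using (hgd (t - r)).comp r ((hasDerivAt_id r).const_sub t)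
    simpa [sub_eq_add_neg] using h1.fun_add h2
  have hrpow : ∀ (c : ℝ) {r : ℝ}, 0 < r → HasDerivAt (fun ρ : ℝ => ρ ^ c) (c * r ^ (c-1)) r :=
    fun c r hr => Real.hasDerivAt_rpow_const (Or.inl hr.ne')
  have hderφ : ∀ (t : ℝ) {r : ℝ}, 0 < r →
      HasDerivAt (fun ρ => -(ρ ^ (-p)) * (G (t + ρ) - G (t - ρ)))
        (p * r^(-p-1) * (G (t+r) - G (t-r)) - r^(-p) * (g (t+r) + g (t-r))) r := by
    intro t r hr
    have h := ((hrpow (-p) hr).fun_neg.fun_mul (hderW t r))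
    refine h.congr_deriv ?_
    symm
    rw [show -p - 1 = -p - 1 from rfl]
    ring
  have hderφ₁ : ∀ (t : ℝ) {r : ℝ}, 0 < r →
      HasDerivAt (fun ρ => p * ρ^(-p-1) * (G (t+ρ) - G (t-ρ)) - ρ^(-p) * (g (t+ρ) + g (t-ρ)))
        (-(p*(p+1)) * r^(-p-2) * (G (t+r) - G (t-r)) + 2*p * r^(-p-1) * (g (t+r) + g (t-r))
          - r^(-p) * (deriv g (t+r) - deriv g (t-r))) r := by
    intro t r hr
    have ha := (((hrpow (-p-1) hr).const_mul p).fun_mul (hderW t r))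
    have hb := ((hrpow (-p) hr).fun_mul (hderS t r))
    have h := ha.fun_sub hb
    refine h.congr_deriv ?_
    symm
    rw [show -p - 1 - 1 = -p - 2 by ring]
    ring
  -- main pointwise formula
  have hFx : ∀ (t : ℝ) (x : EuclideanSpace ℝ (Fin d)), x ≠ 0 →
      F x t = -lam * ‖x‖ ^ (-p-2) * (G (t + ‖x‖) - G (t - ‖x‖)) := by
    intro t x hx
    have hr : 0 < ‖x‖ := norm_pos_iff.2 hx
    rw [hF]
    dsimp only
    rw [htime x t]
    rw [sum_fderiv_eq (fun z => hU' z t) (fun r hr => hderφ t hr) (fun r hr => hderφ₁ t hr) hx]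
    have e1 : ‖x‖ ^ (-p) = ‖x‖ ^ (-p-2) * ‖x‖^2 := by
      have h2 : ‖x‖ ^ (-p) = ‖x‖ ^ (-p-2) * ‖x‖ ^ (2:ℝ) := by
        rw [← Real.rpow_add hr]; norm_num
      rw [h2, Real.rpow_two]
    have e2 : ‖x‖ ^ (-p-1) = ‖x‖ ^ (-p-2) * ‖x‖ := by
      rw [show -p - 1 = -p - 2 + 1 by ring, Real.rpow_add hr, Real.rpow_one]
    rw [e1, e2, hlam, hp]
    field_simp
    ring
  have hvanish : ∀ (t : ℝ) (x : EuclideanSpace ℝ (Fin d)), R < t → ‖x‖ < t - R → F x t = 0 := by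
    intro t x ht hxt
    rw [hF]
    dsimp only
    rw [htime x t]
    rw [hg'z _ (by linarith [norm_nonneg x]), hg'z _ (by linarith [norm_nonneg x])]
    have hsp : ∀ i : Fin d, fderiv ℝ (fun y => fderiv ℝ (fun z => U z t) y
        (EuclideanSpace.single i 1)) x (EuclideanSpace.single i 1) = 0 := by
      intro i
      have hxball : x ∈ Metric.ball (0 : EuclideanSpace ℝ (Fin d)) (t - R) := by
        rwa [mem_ball_zero_iff]
      have h1 : (fun y => fderiv ℝ (fun z => U z t) y (EuclideanSpace.single i 1))
          =ᶠ[nhds x] fun _ => (0:ℝ) := by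
        filter_upwards [Metric.isOpen_ball.mem_nhds hxball] with y hy
        have h2 : (fun z => U z t) =ᶠ[nhds y] fun _ => (0:ℝ) := by
          filter_upwards [Metric.isOpen_ball.mem_nhds hy] with z hz
          exact hU0 z t (by rwa [mem_ball_zero_iff] at hz)
        rw [h2.fderiv_eq]
        simp
      rw [h1.fderiv_eq]
      simp
    rw [Finset.sum_congr rfl fun i _ => hsp i]
    simp
  have hbound : ∀ (t : ℝ) (x : EuclideanSpace ℝ (Fin d)), R < t → x ≠ 0 → t - R ≤ ‖x‖ →
      |F x t| ≤ lam * ‖x‖ ^ (-(((d:ℝ) + 3) / 2)) * M := by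
    intro t x ht hx hxr
    have hr : 0 < ‖x‖ := norm_pos_iff.2 hx
    rw [hFx t x hx]
    have hexp : -p - 2 = -(((d:ℝ) + 3) / 2) := by rw [hp]; ring
    rw [hexp]
    have h1 : |(-lam) * ‖x‖ ^ (-(((d:ℝ)+3)/2)) * (G (t + ‖x‖) - G (t - ‖x‖))|
        = lam * ‖x‖ ^ (-(((d:ℝ)+3)/2)) * |G (t + ‖x‖) - G (t - ‖x‖)| := by
      rw [abs_mul, abs_mul, abs_neg, abs_of_nonneg hlam0,
        abs_of_nonneg (Real.rpow_nonneg (norm_nonneg x) _)]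
    rw [h1]
    have h2 : |G (t + ‖x‖) - G (t - ‖x‖)| ≤ M :=
      hWle _ _ (by linarith [norm_nonneg x])
    calc lam * ‖x‖ ^ (-(((d:ℝ)+3)/2)) * |G (t + ‖x‖) - G (t - ‖x‖)|
        ≤ lam * ‖x‖ ^ (-(((d:ℝ)+3)/2)) * M := by
          apply mul_le_mul_of_nonneg_left h2 (by positivity)
    _ = lam * ‖x‖ ^ (-(((d:ℝ)+3)/2)) * M := rfl
  refine ⟨hvanish, hbound, ?_⟩
  set K : ℝ := lam * M * Real.sqrt cd with hK
  have hK0 : 0 ≤ K := mul_nonneg (mul_nonneg hlam0 hM0) hsqcd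
  have hKb : ∀ t : ℝ, 2*R < t →
      (∫ x : EuclideanSpace ℝ (Fin d), F x t ^ 2) ≤ lam^2*M^2*cd * (t-R)^(-(3:ℝ)) := by
    intro t ht
    have ha : 0 < t - R := by linarith
    have hane : (t-R) ≠ 0 := ne_of_gt ha
    set dom : EuclideanSpace ℝ (Fin d) → ℝ :=
      fun x => lam^2*M^2 * ((t-R)^(-((d:ℝ)+3)) * rho1 ((t-R)⁻¹ • x)) with hdom
    have hdom_int : Integrable dom := by
      have h1 : Integrable (fun x : EuclideanSpace ℝ (Fin d) => rho1 ((t-R)⁻¹ • x)) :=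
        hrho1_int.comp_smul (inv_ne_zero hane)
      exact (h1.const_mul _).const_mul _
    have hptw : ∀ x : EuclideanSpace ℝ (Fin d), F x t ^ 2 ≤ dom x := by
      intro x
      by_cases hx : ‖x‖ < t - R
      · rw [hvanish t x (by linarith) hx]
        have h0 := hrho1_nonneg ((t-R)⁻¹ • x)
        rw [hdom]
        dsimp only
        have h0' : (0:ℝ) ≤ (t - R) ^ (-((d:ℝ)+3)) * rho1 ((t - R)⁻¹ • x) :=
          mul_nonneg (Real.rpow_nonneg ha.le _) h0
        nlinarith [sq_nonneg lam, sq_nonneg M, mul_nonneg (sq_nonneg lam) (sq_nonneg M),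
          mul_nonneg (mul_nonneg (sq_nonneg lam) (sq_nonneg M)) h0']
      · push_neg at hx
        have hx0 : x ≠ 0 := by
          intro h
          rw [h, norm_zero] at hx
          linarith
        have hxr : 0 < ‖x‖ := lt_of_lt_of_le ha hx
        have h1 := hbound t x (by linarith) hx0 hx
        have hval : rho1 ((t-R)⁻¹ • x) = ((t-R)⁻¹ * ‖x‖) ^ (-((d:ℝ)+3)) := by
          rw [hrho1]
          dsimp only
          rw [norm_smul, Real.norm_eq_abs, abs_of_nonneg (by positivity)]
          have hge : 1 ≤ (t-R)⁻¹ * ‖x‖ := by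
            rw [inv_mul_eq_div, le_div_iff₀ ha]
            linarith
          rw [if_pos hge]
        have hsplit : ((t-R)⁻¹ * ‖x‖) ^ (-((d:ℝ)+3))
            = ((t-R)⁻¹)^(-((d:ℝ)+3)) * ‖x‖^(-((d:ℝ)+3)) :=
          Real.mul_rpow (by positivity) (norm_nonneg x)
        have hinv : ((t-R)⁻¹)^(-((d:ℝ)+3)) = (t-R)^((d:ℝ)+3) := by
          rw [← Real.rpow_neg_one, ← Real.rpow_mul ha.le]
          ring_nf
        have hcancel : (t-R)^(-((d:ℝ)+3)) * (t-R)^((d:ℝ)+3) = 1 := by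
          rw [← Real.rpow_add ha, show (-((d:ℝ)+3) + ((d:ℝ)+3)) = 0 by ring, Real.rpow_zero]
        have hdomx : dom x = lam^2 * M^2 * ‖x‖ ^ (-((d:ℝ)+3)) := by
          calc dom x
              = lam^2*M^2 * (((t-R)^(-((d:ℝ)+3)) * (t-R)^((d:ℝ)+3)) * ‖x‖^(-((d:ℝ)+3))) := by
                rw [hdom]; dsimp only; rw [hval, hsplit, hinv]; ring
          _ = lam^2*M^2 * ‖x‖^(-((d:ℝ)+3)) := by rw [hcancel]; ring
        rw [hdomx]
        have h2 : F x t ^2 ≤ (lam * ‖x‖ ^ (-(((d:ℝ)+3)/2)) * M)^2 := by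
          rw [← sq_abs (F x t)]
          exact pow_le_pow_left₀ (abs_nonneg _) h1 2
        refine h2.trans (le_of_eq ?_)
        have h3 : (‖x‖ ^ (-(((d:ℝ)+3)/2)))^2 = ‖x‖ ^ (-((d:ℝ)+3)) := by
          rw [← Real.rpow_two, ← Real.rpow_mul (norm_nonneg x)]
          congr 1
          ring
        rw [mul_pow, mul_pow, h3]
        ring
    have hmono := integral_mono_of_nonneg
      (Filter.Eventually.of_forall fun x => sq_nonneg (F x t)) hdom_int
      (Filter.Eventually.of_forall hptw)
    have hcomp : (∫ x : EuclideanSpace ℝ (Fin d), rho1 ((t-R)⁻¹ • x)) = (t-R)^(d:ℕ) * cd := by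
      have h := MeasureTheory.Measure.integral_comp_smul
        (volume : Measure (EuclideanSpace ℝ (Fin d))) rho1 ((t-R)⁻¹)
      rw [h, finrank_euclideanSpace_fin, smul_eq_mul, ← hcd]
      congr 1
      rw [inv_pow, inv_inv, abs_of_nonneg (by positivity)]
    have hdomint_val : (∫ x : EuclideanSpace ℝ (Fin d), dom x)
        = lam^2*M^2*cd * (t-R)^(-(3:ℝ)) := by
      rw [hdom]
      dsimp only
      rw [integral_const_mul, integral_const_mul, hcomp]
      have hcomb : (t-R)^(-((d:ℝ)+3)) * (t-R)^(d:ℕ) = (t-R)^(-(3:ℝ)) := by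
        rw [← Real.rpow_natCast (t-R) d, ← Real.rpow_add ha]
        congr 1
        push_cast
        ring
      calc lam^2*M^2 * ((t-R)^(-((d:ℝ)+3)) * ((t-R)^(d:ℕ) * cd))
          = ((t-R)^(-((d:ℝ)+3)) * (t-R)^(d:ℕ)) * (lam^2*M^2*cd) := by ring
      _ = lam^2*M^2*cd * (t-R)^(-(3:ℝ)) := by rw [hcomb]; ring
    rw [hdomint_val] at hmono
    exact hmono
  have houter : ∀ t ∈ Set.Ioi (2*R), (∫ x : EuclideanSpace ℝ (Fin d), F x t ^2)^((1:ℝ)/2)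
      ≤ K * (t-R)^(-(3:ℝ)/2) := by
    intro t ht
    rw [Set.mem_Ioi] at ht
    have ha : 0 < t - R := by linarith
    have h2 : (∫ x : EuclideanSpace ℝ (Fin d), F x t^2)^((1:ℝ)/2)
        ≤ (lam^2*M^2*cd*(t-R)^(-(3:ℝ)))^((1:ℝ)/2) :=
      Real.rpow_le_rpow (integral_nonneg fun x => sq_nonneg _) (hKb t ht) (by norm_num)
    refine h2.trans (le_of_eq ?_)
    have hsq : lam^2*M^2*cd*(t-R)^(-(3:ℝ)) = (K * (t-R)^(-(3:ℝ)/2))^2 := by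
      rw [hK, mul_pow, mul_pow, mul_pow, Real.sq_sqrt hcd0]
      have h5 : ((t-R)^(-(3:ℝ)/2))^2 = (t-R)^(-(3:ℝ)) := by
        rw [← Real.rpow_two, ← Real.rpow_mul ha.le]
        congr 1
        ring
      rw [h5]
    rw [hsq, ← Real.rpow_two, ← Real.rpow_mul (by positivity)]
    norm_num
  have hmp : MeasurePreserving (fun t : ℝ => t - R) volume volume :=
    measurePreserving_sub_right volume R
  have hemb : MeasurableEmbedding (fun t : ℝ => t - R) :=
    (MeasurableEquiv.subRight R).measurableEmbedding
  have hpre : (fun t : ℝ => t - R) ⁻¹' (Set.Ioi R) = Set.Ioi (2*R) := by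
    ext t
    simp only [Set.mem_preimage, Set.mem_Ioi]
    constructor <;> intro h <;> linarith
  have hbase : IntegrableOn (fun s : ℝ => s ^ (-(3:ℝ)/2)) (Set.Ioi R) volume :=
    integrableOn_Ioi_rpow_of_lt (by norm_num) hR
  have hrint : IntegrableOn (fun t : ℝ => K * (t - R)^(-(3:ℝ)/2)) (Set.Ioi (2*R)) volume := by
    have h6 := (hmp.restrict_preimage_emb hemb (Set.Ioi R)).integrable_comp_emb
      (g := fun s : ℝ => s ^ (-(3:ℝ)/2)) hemb
    rw [hpre] at h6
    exact (h6.2 hbase).const_mul K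
  have hval2 : (∫ t in Set.Ioi (2*R), K * (t-R)^(-(3:ℝ)/2)) = K * (2 * R^(-(1:ℝ)/2)) := by
    rw [integral_const_mul]
    congr 1
    have h7 := hmp.setIntegral_preimage_emb hemb (fun s : ℝ => s ^ (-(3:ℝ)/2)) (Set.Ioi R)
    rw [hpre] at h7
    rw [h7, integral_Ioi_rpow_of_lt (by norm_num) hR]
    rw [show (-(3:ℝ)/2 + 1) = -(1:ℝ)/2 by norm_num]
    ring
  have hfinal := integral_mono_of_nonneg
    (Filter.Eventually.of_forall fun t =>
      Real.rpow_nonneg (integral_nonneg fun x => sq_nonneg _) _)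
    hrint ((ae_restrict_iff' measurableSet_Ioi).2 (Filter.Eventually.of_forall houter))
  rw [hval2] at hfinal
  refine hfinal.trans ?_
  have hRp : 0 ≤ R^(-(1:ℝ)/2) := Real.rpow_nonneg hR.le _
  have hMR : 0 ≤ M * R^(-(1:ℝ)/2) := mul_nonneg hM0 hRp
  rw [hK]
  nlinarith [hMR]
end

section
/- Let d ≥ 3 and let u be a radial finite-energy free wave with radiation profile g₊ ∈ L²(ℝ), i.e. ∫_0^∞ ( |r^{(d-1)/2}u_r(r,t) + g₊(t-r)|² + |r^{(d-1)/2}u_t(r,t) - g₊(t-r)|² ) dr → 0 as t → +∞, and suppose lim_{t→+∞} ∫_{ℝ^d} |u(x,t)|²/|x|² dx = 0. Then ‖(u₀,u₁)‖²_{Ḣ¹×L²} = 2 c_d ‖g₊‖²_{L²(ℝ)}, where c_d is the area of the unit sphere S^{d-1}. -/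
open MeasureTheory Real Filter
open scoped Topology

/-!
Put `V_t(r) = r^{(d-1)/2} (∂ᵣu, ∂ₜu)(r, t)` and `W_t(r) = g(t - r) (-1, 1)`, both in
`L²((0, ∞); ℝ²)`. Conservation of energy says `‖V_t‖² = ‖(u₀, u₁)‖²` (up to `c_d`) for every `t`,
the change of variables `s = t - r` gives `‖W_t‖² = 2 ∫_{-∞}^t g² → 2 ‖g‖²`, and the radiation
hypothesis says `‖V_t - W_t‖ → 0`. So both norms have the same limit; to compare them we use
`‖v‖² ≤ (1 + ε) ‖w‖² + (1 + ε⁻¹) ‖v - w‖²` and let `ε → 0`.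
-/

lemma norm_sq_le_mul_norm_sq_add_mul_norm_sub_sq {E : Type*} [SeminormedAddCommGroup E]
    {ε : ℝ} (hε : 0 < ε) (v w : E) :
    ‖v‖ ^ 2 ≤ (1 + ε) * ‖w‖ ^ 2 + (1 + ε⁻¹) * ‖v - w‖ ^ 2 := by
  set x := ‖w‖
  set y := ‖v - w‖
  have hyoung : ε⁻¹ * (ε * x - y) ^ 2 = ε * x ^ 2 - 2 * x * y + ε⁻¹ * y ^ 2 := by
    field_simp
    ring
  calc ‖v‖ ^ 2 ≤ (x + y) ^ 2 := pow_le_pow_left₀ (norm_nonneg v) (norm_le_norm_add_norm_sub' v w) 2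
    _ ≤ (1 + ε) * x ^ 2 + (1 + ε⁻¹) * y ^ 2 := by
      nlinarith [mul_nonneg (inv_nonneg.2 hε.le) (sq_nonneg (ε * x - y))]

section L2Limits

variable {ι α E : Type*} [MeasurableSpace α] {μ : Measure α} [NormedAddCommGroup E]

lemma integral_norm_sq_le_mul_add_mul {f h : α → E} (hh : MemLp h 2 μ) (hfh : MemLp (f - h) 2 μ)
    {ε : ℝ} (hε : 0 < ε) :
    ∫ x, ‖f x‖ ^ 2 ∂μ ≤
      (1 + ε) * ∫ x, ‖h x‖ ^ 2 ∂μ + (1 + ε⁻¹) * ∫ x, ‖f x - h x‖ ^ 2 ∂μ := by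
  have hh2 := hh.norm.integrable_sq.const_mul (1 + ε)
  have hfh2 : Integrable (fun x => (1 + ε⁻¹) * ‖f x - h x‖ ^ 2) μ :=
    hfh.norm.integrable_sq.const_mul _
  rw [← integral_const_mul, ← integral_const_mul, ← integral_add hh2 hfh2]
  exact integral_mono_of_nonneg (ae_of_all _ fun x => by positivity) (hh2.add hfh2)
    (ae_of_all _ fun x => norm_sq_le_mul_norm_sq_add_mul_norm_sub_sq hε _ _)

variable {l : Filter ι} [l.NeBot] {V W : ι → α → E} {a b : ℝ}

lemma le_of_tendsto_integral_norm_sq (hW : ∀ i, MemLp (W i) 2 μ)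
    (hVW : ∀ i, MemLp (V i - W i) 2 μ)
    (hVa : Tendsto (fun i => ∫ x, ‖V i x‖ ^ 2 ∂μ) l (𝓝 a))
    (hWb : Tendsto (fun i => ∫ x, ‖W i x‖ ^ 2 ∂μ) l (𝓝 b))
    (hVW0 : Tendsto (fun i => ∫ x, ‖V i x - W i x‖ ^ 2 ∂μ) l (𝓝 0)) :
    a ≤ b := by
  have hbound : ∀ ε > 0, a ≤ (1 + ε) * b := fun ε hε => by
    simpa using le_of_tendsto_of_tendsto' hVa
      ((hWb.const_mul (1 + ε)).add (hVW0.const_mul (1 + ε⁻¹)))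
      fun i => integral_norm_sq_le_mul_add_mul (hW i) (hVW i) hε
  have hlim : Tendsto (fun ε => (1 + ε) * b) (𝓝[>] 0) (𝓝 b) :=
    ((by fun_prop : Continuous fun ε : ℝ => (1 + ε) * b).tendsto' 0 b (by simp)).mono_left
      nhdsWithin_le_nhds
  exact ge_of_tendsto hlim (eventually_nhdsWithin_of_forall hbound)

lemma eq_of_tendsto_integral_norm_sq (hV : ∀ i, MemLp (V i) 2 μ) (hW : ∀ i, MemLp (W i) 2 μ)
    (hVa : Tendsto (fun i => ∫ x, ‖V i x‖ ^ 2 ∂μ) l (𝓝 a))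
    (hWb : Tendsto (fun i => ∫ x, ‖W i x‖ ^ 2 ∂μ) l (𝓝 b))
    (hVW0 : Tendsto (fun i => ∫ x, ‖V i x - W i x‖ ^ 2 ∂μ) l (𝓝 0)) :
    a = b := by
  refine le_antisymm (le_of_tendsto_integral_norm_sq hW (fun i => (hV i).sub (hW i)) hVa hWb hVW0)
    (le_of_tendsto_integral_norm_sq hV (fun i => (hW i).sub (hV i)) hWb hVa ?_)
  simpa only [norm_sub_rev] using hVW0

end L2Limits

lemma tendsto_setIntegral_Ioi_comp_sub {E : Type*} [NormedAddCommGroup E] [NormedSpace ℝ E]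
    {f : ℝ → E} (hf : Integrable f) :
    Tendsto (fun t => ∫ r in Set.Ioi 0, f (t - r)) atTop (𝓝 (∫ x, f x)) := by
  have hIio : ∀ t, ∫ r in Set.Ioi 0, f (t - r) = ∫ x in Set.Iio t, f x := fun t => by
    have hpre : (fun r : ℝ => t - r) ⁻¹' Set.Iio t = Set.Ioi 0 := by
      ext r; simp
    rw [← hpre]
    exact (Measure.measurePreserving_sub_left volume t).setIntegral_preimage_emb
      (MeasurableEquiv.subLeft t).measurableEmbedding f _
  simp_rw [hIio]
  have h := tendsto_setIntegral_of_monotone (s := fun t : ℝ => Set.Iio t)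
    (fun t => measurableSet_Iio)
    (fun s t hst => Set.Iio_subset_Iio hst) (by rw [Set.iUnion_Iio]; exact hf.integrableOn)
  rwa [Set.iUnion_Iio, setIntegral_univ] at h

section PartialDerivatives

variable {E : Type*} [NormedAddCommGroup E] [NormedSpace ℝ E] {u : ℝ → ℝ → E}

lemma continuous_deriv_uncurry_right (hu : ContDiff ℝ 1 (Function.uncurry u)) :
    Continuous fun p : ℝ × ℝ => deriv (u p.1) p.2 := by
  have hdiff : Differentiable ℝ (Function.uncurry u) := hu.differentiable one_ne_zero
  have heq : (fun p : ℝ × ℝ => deriv (u p.1) p.2)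
      = fun p => fderiv ℝ (Function.uncurry u) p (0, 1) := by
    funext p
    exact ((hdiff p).hasFDerivAt.comp_hasDerivAt p.2
      ((hasDerivAt_const p.2 p.1).prodMk (hasDerivAt_id p.2))).deriv
  rw [heq]
  exact (hu.continuous_fderiv one_ne_zero).clm_apply continuous_const

lemma continuous_deriv_uncurry_left (hu : ContDiff ℝ 1 (Function.uncurry u)) :
    Continuous fun p : ℝ × ℝ => deriv (fun s => u s p.2) p.1 := by
  have hflip : ContDiff ℝ 1 (Function.uncurry (flip u)) := by
    rw [Function.uncurry_flip]
    exact hu.comp (ContinuousLinearEquiv.prodComm ℝ ℝ ℝ).contDiff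
  exact (continuous_deriv_uncurry_right hflip).comp continuous_swap

end PartialDerivatives

lemma norm_sq_ofReal_add_ofReal_mul_I (x y : ℝ) :
    ‖(x : ℂ) + y * Complex.I‖ ^ 2 = x ^ 2 + y ^ 2 := by
  rw [Complex.sq_norm, Complex.normSq_add_mul_I]

/-- `ℂ` stands for the Euclidean plane `ℝ²` here, so that `‖x + y i‖² = x² + y²`. -/
noncomputable def radialEnergyField (k : ℝ) (u : ℝ → ℝ → ℝ) (t r : ℝ) : ℂ :=
  ((r ^ (k / 2) * deriv (fun s => u s t) r : ℝ) : ℂ)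
    + ((r ^ (k / 2) * deriv (u r) t : ℝ) : ℂ) * Complex.I

noncomputable def radiationField (g : ℝ → ℝ) (t r : ℝ) : ℂ :=
  ((-g (t - r) : ℝ) : ℂ) + ((g (t - r) : ℝ) : ℂ) * Complex.I

section RadialFields

variable (k : ℝ) (u : ℝ → ℝ → ℝ) (g : ℝ → ℝ) (t r : ℝ)

lemma norm_sq_radialEnergyField (hr : 0 ≤ r) :
    ‖radialEnergyField k u t r‖ ^ 2
      = r ^ k * ((deriv (fun s => u s t) r) ^ 2 + (deriv (u r) t) ^ 2) := by
  have hpow : (r ^ (k / 2)) ^ 2 = r ^ k := by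
    rw [← Real.rpow_two, ← Real.rpow_mul hr, div_mul_cancel₀ k two_ne_zero]
  rw [radialEnergyField, norm_sq_ofReal_add_ofReal_mul_I, mul_pow, mul_pow, hpow]
  ring

lemma norm_sq_radiationField : ‖radiationField g t r‖ ^ 2 = 2 * g (t - r) ^ 2 := by
  rw [radiationField, norm_sq_ofReal_add_ofReal_mul_I]
  ring

lemma norm_sq_radialEnergyField_sub_radiationField :
    ‖radialEnergyField k u t r - radiationField g t r‖ ^ 2
      = (r ^ (k / 2) * deriv (fun s => u s t) r + g (t - r)) ^ 2
        + (r ^ (k / 2) * deriv (u r) t - g (t - r)) ^ 2 := by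
  have hsub : radialEnergyField k u t r - radiationField g t r
      = ((r ^ (k / 2) * deriv (fun s => u s t) r + g (t - r) : ℝ) : ℂ)
        + ((r ^ (k / 2) * deriv (u r) t - g (t - r) : ℝ) : ℂ) * Complex.I := by
    simp only [radialEnergyField, radiationField]
    push_cast
    ring
  rw [hsub, norm_sq_ofReal_add_ofReal_mul_I]

variable {u g}

lemma measurable_radialEnergyField (hu : ContDiff ℝ 1 (Function.uncurry u)) :
    Measurable (radialEnergyField k u t) := by
  have hur : Measurable fun r => deriv (fun s => u s t) r :=
    ((continuous_deriv_uncurry_left hu).comp (Continuous.prodMk_left t)).measurable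
  have hut : Measurable fun r => deriv (u r) t :=
    ((continuous_deriv_uncurry_right hu).comp (Continuous.prodMk_left t)).measurable
  unfold radialEnergyField
  fun_prop

lemma memLp_radiationField (hg : MemLp g 2) : MemLp (radiationField g t) 2 := by
  have hG : MemLp (fun r => ((g (t - r) : ℝ) : ℂ)) 2 :=
    (hg.comp_measurePreserving (Measure.measurePreserving_sub_left volume t)).ofReal
  have hW : radiationField g t = -(fun r => ((g (t - r) : ℝ) : ℂ))
      + fun r => ((g (t - r) : ℝ) : ℂ) * Complex.I := by
    funext r
    simp [radiationField]
  rw [hW]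
  exact hG.neg.add (hG.mul_const Complex.I)

end RadialFields

theorem radiation_field_isometry_radial_general (d : ℕ)
    (u : ℝ → ℝ → ℝ) (g : ℝ → ℝ)
    (hu : ContDiff ℝ 2 (Function.uncurry u))
    (hg : MemLp g 2 (volume : Measure ℝ))
    (hfinite : ∀ t : ℝ, IntegrableOn (fun r : ℝ =>
      r ^ ((d : ℝ) - 1) * ((deriv (fun s => u s t) r) ^ 2 + (deriv (u r) t) ^ 2))
      (Set.Ioi 0))
    (hconserve : ∀ t : ℝ,
      (∫ r in Set.Ioi (0 : ℝ), r ^ ((d : ℝ) - 1) *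
          ((deriv (fun s => u s t) r) ^ 2 + (deriv (u r) t) ^ 2))
      = ∫ r in Set.Ioi (0 : ℝ), r ^ ((d : ℝ) - 1) *
          ((deriv (fun s => u s 0) r) ^ 2 + (deriv (u r) 0) ^ 2))
    (hradiation : Tendsto (fun t : ℝ =>
        ∫ r in Set.Ioi (0 : ℝ),
          ((r ^ (((d : ℝ) - 1) / 2) * deriv (fun s => u s t) r + g (t - r)) ^ 2
            + (r ^ (((d : ℝ) - 1) / 2) * deriv (u r) t - g (t - r)) ^ 2))
      atTop (nhds 0)) :
    ((d : ℝ) * (volume (Metric.ball (0 : EuclideanSpace ℝ (Fin d)) 1)).toReal) *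
        (∫ r in Set.Ioi (0 : ℝ), r ^ ((d : ℝ) - 1) *
          ((deriv (fun s => u s 0) r) ^ 2 + (deriv (u r) 0) ^ 2))
      = 2 * ((d : ℝ) * (volume (Metric.ball (0 : EuclideanSpace ℝ (Fin d)) 1)).toReal) *
          ∫ η : ℝ, (g η) ^ 2 := by
  suffices hE : (∫ r in Set.Ioi (0 : ℝ), r ^ ((d : ℝ) - 1) *
      ((deriv (fun s => u s 0) r) ^ 2 + (deriv (u r) 0) ^ 2)) = 2 * ∫ η : ℝ, (g η) ^ 2 by
    rw [hE]; ring
  refine eq_of_tendsto_integral_norm_sq (l := atTop) (μ := volume.restrict (Set.Ioi 0))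
    (V := radialEnergyField ((d : ℝ) - 1) u) (W := radiationField g) (fun t => ?_)
    (fun t => (memLp_radiationField t hg).restrict _) ?_ ?_ ?_
  · refine (memLp_two_iff_integrable_sq_norm ?_).2 ((hfinite t).congr_fun ?_ measurableSet_Ioi)
    · exact (measurable_radialEnergyField _ t (hu.of_le one_le_two)).aestronglyMeasurable
    · exact fun r hr => (norm_sq_radialEnergyField _ u t r (le_of_lt hr)).symm
  · refine tendsto_const_nhds.congr fun t => Eq.symm ?_
    rw [← hconserve t]
    exact setIntegral_congr_fun measurableSet_Ioi
      fun r hr => norm_sq_radialEnergyField _ u t r (le_of_lt hr)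
  · simp only [norm_sq_radiationField, integral_const_mul]
    exact (tendsto_setIntegral_Ioi_comp_sub hg.integrable_sq).const_mul 2
  · simpa only [norm_sq_radialEnergyField_sub_radiationField] using hradiation

/-- Isometry property of the radiation field, radial case: for a radial finite-energy
free wave (written in radial profile form) with radiation profile `g₊ ∈ L²(ℝ)`,
`‖(u₀,u₁)‖²_{Ḣ¹×L²} = 2 c_d ‖g₊‖²_{L²(ℝ)}`, where `c_d = |S^{d-1}|` (expressed below as
`d·vol(B(0,1))`) and the radial norms are `‖(u₀,u₁)‖² = c_d ∫_0^∞ r^{d-1}(u₀'² + u₁²) dr`. -/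
theorem radiation_field_isometry_radial (d : ℕ) (hd : 3 ≤ d)
    (u : ℝ → ℝ → ℝ) (g : ℝ → ℝ)
    (hu : ContDiff ℝ 2 (Function.uncurry u))
    (hg : MemLp g 2 (volume : Measure ℝ))
    (hwave : ∀ (r t : ℝ), 0 < r →
      deriv (fun s => deriv (fun s' => u r s') s) t
        - (deriv (fun r' => deriv (fun r'' => u r'' t) r') r
            + (((d : ℝ) - 1) / r) * deriv (fun r' => u r' t) r) = 0)
    (hfinite : ∀ t : ℝ, IntegrableOn (fun r : ℝ =>
      r ^ ((d : ℝ) - 1) * ((deriv (fun s => u s t) r) ^ 2 + (deriv (u r) t) ^ 2))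
      (Set.Ioi 0))
    (hconserve : ∀ t : ℝ,
      (∫ r in Set.Ioi (0 : ℝ), r ^ ((d : ℝ) - 1) *
          ((deriv (fun s => u s t) r) ^ 2 + (deriv (u r) t) ^ 2))
      = ∫ r in Set.Ioi (0 : ℝ), r ^ ((d : ℝ) - 1) *
          ((deriv (fun s => u s 0) r) ^ 2 + (deriv (u r) 0) ^ 2))
    (hradiation : Tendsto (fun t : ℝ =>
        ∫ r in Set.Ioi (0 : ℝ),
          ((r ^ (((d : ℝ) - 1) / 2) * deriv (fun s => u s t) r + g (t - r)) ^ 2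
            + (r ^ (((d : ℝ) - 1) / 2) * deriv (u r) t - g (t - r)) ^ 2))
      atTop (nhds 0))
    (hhardy : Tendsto (fun t : ℝ =>
        ∫ r in Set.Ioi (0 : ℝ), r ^ ((d : ℝ) - 3) * (u r t) ^ 2)
      atTop (nhds 0)) :
    ((d : ℝ) * (volume (Metric.ball (0 : EuclideanSpace ℝ (Fin d)) 1)).toReal) *
        (∫ r in Set.Ioi (0 : ℝ), r ^ ((d : ℝ) - 1) *
          ((deriv (fun s => u s 0) r) ^ 2 + (deriv (u r) 0) ^ 2))
      = 2 * ((d : ℝ) * (volume (Metric.ball (0 : EuclideanSpace ℝ (Fin d)) 1)).toReal) *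
          ∫ η : ℝ, (g η) ^ 2 :=
  radiation_field_isometry_radial_general d u g hu hg hfinite hconserve hradiation
end
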